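/- arXiv:1704.02262 — 3 statements merged into one kernel-verified Lean document; each statement's English description precedes it below -/
import Mathlib

section
/- Let S be a finite set and f : S → M a function with |M| ≤ |S| and log|M| ≤ L. Then there exists a finite set M' with |M'| ≤ (2L + 1)·|M| and a function g : S → M' refining f (i.e., g(x) = g(x') implies f(x) = f(x')) such that |g⁻¹(m')| ≤ |S|/|M| for every m' ∈ M'. -/
open scoped Classical BigOperators

/-- balanced refinement of a partition.  Any `f : S → M` with
`|M| ≤ |S|` and `log₂|M| ≤ L` admits a refinement `g : S → Fin k` with
`k ≤ (2L+1)·|M|` all of whose fibers have size at most the average `|S|/|M|`. -/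
theorem stmt_1 {S M : Type} [Fintype S] [Fintype M]
    (f : S → M) (hM : Fintype.card M ≤ Fintype.card S)
    (L : ℕ) (hL : Real.logb 2 (Fintype.card M) ≤ L) :
    ∃ (k : ℕ) (g : S → Fin k),
      k ≤ (2 * L + 1) * Fintype.card M ∧
      (∀ x x' : S, g x = g x' → f x = f x') ∧
      (∀ m' : Fin k,
        ((Finset.univ.filter (fun s : S => g s = m')).card : ℝ)
          ≤ (Fintype.card S : ℝ) / (Fintype.card M : ℝ)) := by
  classical
  by_cases hS0 : IsEmpty S
  · refine ⟨0, fun x => (hS0.false x).elim, Nat.zero_le _,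
      fun x => (hS0.false x).elim, fun v => ?_⟩
    have : (Finset.univ.filter (fun s : S => (hS0.false s).elim = v)) = ∅ := by
      apply Finset.eq_empty_of_forall_notMem
      intro x _
      exact hS0.false x
    rw [this]
    simp
  · -- S nonempty
    rw [not_isEmpty_iff] at hS0
    obtain ⟨x₀⟩ := hS0
    haveI : Nonempty M := ⟨f x₀⟩
    set n := Fintype.card S with hn
    set m := Fintype.card M with hm
    have hm1 : 1 ≤ m := Fintype.card_pos
    by_cases hM1 : m = 1
    · -- |M| = 1 : trivial, one part
      haveI : Subsingleton M := Fintype.card_le_one_iff_subsingleton.mp (le_of_eq hM1)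
      refine ⟨1, fun _ => 0, ?_, fun x x' _ => Subsingleton.elim _ _, fun v => ?_⟩
      · nlinarith
      · rw [hM1]
        push_cast
        rw [div_one]
        exact_mod_cast Nat.cast_le.mpr (Finset.card_filter_le _ _)
    · -- main case : 2 ≤ m
      have hm2 : 2 ≤ m := by omega
      have hL1 : 1 ≤ L := by
        have h1 : (1 : ℝ) ≤ Real.logb 2 m := by
          rw [show (1:ℝ) = Real.logb 2 2 by simp]
          exact Real.logb_le_logb_of_le (by norm_num) (by norm_num)
            (by exact_mod_cast hm2)
        have : (1 : ℝ) ≤ (L : ℝ) := le_trans h1 hL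
        exact_mod_cast this
      set b := n / m with hbdef
      have hb : 0 < b := (Nat.one_le_div_iff (by omega)).mpr hM
      set s : M → ℕ := fun y => (Finset.univ.filter (fun x : S => f x = y)).card with hs
      set t : M → ℕ := fun y => s y / b + 1 with ht
      -- ranks within fibers
      obtain ⟨ρ⟩ : Nonempty (S ↪ Fin n) := ⟨(Fintype.equivFin S).toEmbedding⟩
      set r : S → ℕ := fun x =>
        (Finset.univ.filter (fun y : S => f y = f x ∧ ρ y < ρ x)).card with hr
      -- r x < s (f x)
      have hrlt : ∀ x : S, r x < s (f x) := by
        intro x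
        have hsub : (Finset.univ.filter (fun y : S => f y = f x ∧ ρ y < ρ x))
            ⊆ (Finset.univ.filter (fun y : S => f y = f x)).erase x := by
          intro y hy
          simp only [Finset.mem_filter, Finset.mem_univ, true_and] at hy
          refine Finset.mem_erase.mpr ⟨?_, by simp [hy.1]⟩
          intro hxy; subst hxy; exact lt_irrefl _ hy.2
        have hxmem : x ∈ Finset.univ.filter (fun y : S => f y = f x) := by simp
        have h1 : r x ≤ ((Finset.univ.filter (fun y : S => f y = f x)).erase x).card :=
          Finset.card_le_card hsub
        rw [Finset.card_erase_of_mem hxmem] at h1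
        have h2 : 0 < s (f x) := by
          simp only [hs]
          exact Finset.card_pos.mpr ⟨x, hxmem⟩
        simp only [hs] at h2 ⊢
        omega
      -- r injective on fibers
      have hrinj : ∀ x x' : S, f x = f x' → r x = r x' → x = x' := by
        intro x x' hf hrr
        by_contra hne
        have hρ : ρ x ≠ ρ x' := fun h => hne (ρ.injective h)
        simp only [hr] at hrr
        rcases lt_or_gt_of_ne hρ with h | h
        · -- r x < r x'
          have hsub : (Finset.univ.filter (fun y : S => f y = f x ∧ ρ y < ρ x))
              ⊆ (Finset.univ.filter (fun y : S => f y = f x' ∧ ρ y < ρ x')) := by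
            intro y hy
            simp only [Finset.mem_filter, Finset.mem_univ, true_and] at hy ⊢
            exact ⟨hf ▸ hy.1, lt_trans hy.2 h⟩
          have hmem : x ∈ Finset.univ.filter (fun y : S => f y = f x' ∧ ρ y < ρ x') := by
            simp [hf, h]
          have hnmem : x ∉ Finset.univ.filter (fun y : S => f y = f x ∧ ρ y < ρ x) := by
            simp
          have := Finset.card_lt_card
            ((Finset.ssubset_iff_of_subset hsub).mpr ⟨x, hmem, hnmem⟩)
          omega
        · have hsub : (Finset.univ.filter (fun y : S => f y = f x' ∧ ρ y < ρ x'))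
              ⊆ (Finset.univ.filter (fun y : S => f y = f x ∧ ρ y < ρ x)) := by
            intro y hy
            simp only [Finset.mem_filter, Finset.mem_univ, true_and] at hy ⊢
            exact ⟨hf ▸ hy.1, lt_trans hy.2 h⟩
          have hmem : x' ∈ Finset.univ.filter (fun y : S => f y = f x ∧ ρ y < ρ x) := by
            simp [hf.symm, h]
          have hnmem : x' ∉ Finset.univ.filter (fun y : S => f y = f x' ∧ ρ y < ρ x') := by
            simp
          have := Finset.card_lt_card
            ((Finset.ssubset_iff_of_subset hsub).mpr ⟨x', hmem, hnmem⟩)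
          omega
      -- the refined index type
      set k := ∑ y : M, t y with hk
      have hcardT : Fintype.card (Σ y : M, Fin (t y)) = k := by
        simp [hk, Fintype.card_sigma]
      set eqv : (Σ y : M, Fin (t y)) ≃ Fin k := Fintype.equivFinOfCardEq hcardT with heqv
      have hjlt : ∀ x : S, r x / b < t (f x) := by
        intro x
        have h1 : r x / b ≤ s (f x) / b := Nat.div_le_div_right (le_of_lt (hrlt x))
        simp only [ht]
        omega
      set g : S → Fin k := fun x => eqv ⟨f x, ⟨r x / b, hjlt x⟩⟩ with hg
      -- sum of fiber sizes is n
      have hsum : ∑ y : M, s y = n := by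
        simp only [hs, hn]
        rw [← Finset.card_univ (α := S)]
        exact (Finset.card_eq_sum_card_fiberwise (fun x _ => Finset.mem_univ (f x))).symm
      -- cardinality bound
      have hkval : k = (∑ y : M, s y / b) + m := by
        rw [hk]
        simp only [ht]
        rw [Finset.sum_add_distrib]
        simp [hm]
      have hdivsum : (∑ y : M, s y / b) ≤ n / b := by
        rw [Nat.le_div_iff_mul_le hb, Finset.sum_mul]
        calc ∑ y : M, s y / b * b ≤ ∑ y : M, s y :=
              Finset.sum_le_sum (fun y _ => Nat.div_mul_le_self _ _)
          _ = n := hsum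
      have hnb : n / b ≤ 2 * m := by
        have hdm := Nat.div_add_mod n m
        rw [← hbdef] at hdm
        have hmod : n % m < m := Nat.mod_lt _ (by omega)
        have hmb : m ≤ m * b := Nat.le_mul_of_pos_right m hb
        refine le_of_lt ((Nat.div_lt_iff_lt_mul hb).mpr ?_)
        have hring : 2 * m * b = 2 * (m * b) := by ring
        omega
      have hkle : k ≤ (2 * L + 1) * m := by
        have h3 : k ≤ 3 * m := by omega
        nlinarith
      refine ⟨k, g, hkle, ?_, ?_⟩
      · intro x x' hxx
        have := eqv.injective hxx
        exact congrArg Sigma.fst this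
      · intro v
        rcases hveq : eqv.symm v with ⟨m₀, j₀⟩
        have hA : ∀ x : S, g x = v → f x = m₀ ∧ r x / b = (j₀ : ℕ) := by
          intro x hx
          have hx2 : (⟨f x, ⟨r x / b, hjlt x⟩⟩ : Σ y : M, Fin (t y)) = ⟨m₀, j₀⟩ := by
            rw [← hveq]
            rw [hg] at hx
            rw [← hx]
            simp
          exact ⟨congrArg Sigma.fst hx2,
            congrArg (fun q : Σ y : M, Fin (t y) => (q.snd : ℕ)) hx2⟩
        have hcard : (Finset.univ.filter (fun x : S => g x = v)).card ≤ b := by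
          have hmain := Finset.card_le_card_of_injOn (fun x => r x % b)
            (s := Finset.univ.filter (fun x : S => g x = v)) (t := Finset.range b)
            ?_ ?_
          · simpa using hmain
          · intro x _
            exact Finset.mem_range.mpr (Nat.mod_lt _ hb)
          · intro x hx x' hx' hmod
            simp only [Finset.coe_filter, Finset.mem_univ, true_and,
              Set.mem_setOf_eq] at hx hx'
            obtain ⟨hf1, hd1⟩ := hA x hx
            obtain ⟨hf2, hd2⟩ := hA x' hx'
            have hmod' : r x % b = r x' % b := by simpa using hmod
            have e1 : b * (j₀ : ℕ) + r x % b = r x := by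
              rw [← hd1]; exact Nat.div_add_mod _ _
            have e2 : b * (j₀ : ℕ) + r x' % b = r x' := by
              rw [← hd2]; exact Nat.div_add_mod _ _
            have hrr : r x = r x' := by rw [← e1, ← e2, hmod']
            exact hrinj x x' (hf1.trans hf2.symm) hrr
        calc ((Finset.univ.filter (fun x : S => g x = v)).card : ℝ) ≤ (b : ℝ) := by
              exact_mod_cast hcard
          _ ≤ (n : ℝ) / (m : ℝ) := Nat.cast_div_le
end

section
/- For a finite joint alphabet 𝒳×𝒴, a distribution P_{XY}, μ ≥ 0, and δ ≥ 0, define R_μ(δ|P_{XY}) as the infimum of I(W ∧ (X,Y)) + μ·H(Y|W) over all channels P_{W|XY} (with |𝒲| ≤ |𝒳||𝒴|+2) satisfying I(W ∧ Y|X) ≤ δ, and write R_μ(P_{XY}) = R_μ(0|P_{XY}). Then lim_{δ→0} R_μ(δ|P_{XY}) = R_μ(P_{XY}). -/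
open scoped Classical BigOperators
noncomputable section

/-- Shannon entropy (base 2) of a function on a finite type
(with the convention `0 · log 0 = 0`, automatic since `Real.logb 2 0 = 0`). -/
def ent {α : Type*} [Fintype α] (p : α → ℝ) : ℝ := - ∑ a, p a * Real.logb 2 (p a)

/-- `p` is a probability distribution on a finite type. -/
def IsDist {α : Type*} [Fintype α] (p : α → ℝ) : Prop :=
  (∀ a, 0 ≤ p a) ∧ ∑ a, p a = 1

variable {W X Y : Type*} [Fintype W] [Fintype X] [Fintype Y]

/-- marginal on `W`. -/
def mW (p : W × X × Y → ℝ) : W → ℝ := fun w => ∑ x, ∑ y, p (w, x, y)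

/-- marginal on `X`. -/
def mX (p : W × X × Y → ℝ) : X → ℝ := fun x => ∑ w, ∑ y, p (w, x, y)

/-- marginal on `X × Y`. -/
def mXY (p : W × X × Y → ℝ) : X × Y → ℝ := fun z => ∑ w, p (w, z.1, z.2)

/-- marginal on `W × X`. -/
def mWX (p : W × X × Y → ℝ) : W × X → ℝ := fun q => ∑ y, p (q.1, q.2, y)

/-- marginal on `W × Y`. -/
def mWY (p : W × X × Y → ℝ) : W × Y → ℝ := fun q => ∑ x, p (q.1, x, q.2)

/-- mutual information `I(W ∧ (X,Y))`. -/
def miW_XY (p : W × X × Y → ℝ) : ℝ := ent (mW p) + ent (mXY p) - ent p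

/-- mutual information `I(W ∧ X)`. -/
def miW_X (p : W × X × Y → ℝ) : ℝ := ent (mW p) + ent (mX p) - ent (mWX p)

/-- conditional mutual information `I(W ∧ Y | X)`. -/
def cmiWY_X (p : W × X × Y → ℝ) : ℝ :=
  ent (mWX p) + ent (mXY p) - ent (mX p) - ent p

/-- conditional entropy `H(X | W)`. -/
def condEntX_W (p : W × X × Y → ℝ) : ℝ := ent (mWX p) - ent (mW p)

/-- conditional entropy `H(Y | W)`. -/
def condEntY_W (p : W × X × Y → ℝ) : ℝ := ent (mWY p) - ent (mW p)

variable (X Y) in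
/-- auxiliary alphabet of cardinality `|𝒳||𝒴| + 2`. -/
def Waux : Type := Fin (Fintype.card X * Fintype.card Y + 2)

instance : Fintype (Waux X Y) := by unfold Waux; infer_instance

/-- a channel from `X × Y` to `W`: nonnegative rows summing to one. -/
def IsChannel {Z W : Type*} [Fintype Z] [Fintype W] (ch : Z → W → ℝ) : Prop :=
  (∀ z w, 0 ≤ ch z w) ∧ ∀ z, ∑ w, ch z w = 1

/-- joint law of `(W, X, Y)` obtained by attaching channel `ch` to `P_{XY}`. -/
def jointXY (P : X × Y → ℝ) (ch : X × Y → Waux X Y → ℝ) : Waux X Y × X × Y → ℝ :=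
  fun t => P (t.2.1, t.2.2) * ch (t.2.1, t.2.2) t.1

/-- `R_μ(δ|P_{XY})`: infimum of `I(W ∧ (X,Y)) + μ·H(Y|W)` over channels
`P_{W|XY}` with `|𝒲| ≤ |𝒳||𝒴|+2` satisfying `I(W ∧ Y|X) ≤ δ`. -/
def Rmu (P : X × Y → ℝ) (μ : ℝ) (δ : ℝ) : ℝ :=
  sInf { r : ℝ | ∃ ch : X × Y → Waux X Y → ℝ, IsChannel ch ∧
    cmiWY_X (jointXY P ch) ≤ δ ∧
    r = miW_XY (jointXY P ch) + μ * condEntY_W (jointXY P ch) }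


/-! ### Auxiliary lemmas -/

lemma continuous_mul_logb : Continuous fun x : ℝ => x * Real.logb 2 x := by
  have h := Real.continuous_mul_log.div_const (Real.log 2)
  simpa [Real.logb, mul_div_assoc] using h

lemma continuous_ent {α : Type*} [Fintype α] : Continuous (ent (α := α)) := by
  unfold ent
  exact (continuous_finset_sum _ fun a _ =>
    continuous_mul_logb.comp (continuous_apply a)).neg

lemma continuous_mW : Continuous fun p : W × X × Y → ℝ => mW p :=
  continuous_pi fun w => continuous_finset_sum _ fun x _ =>
    continuous_finset_sum _ fun y _ => continuous_apply _

lemma continuous_mX : Continuous fun p : W × X × Y → ℝ => mX p :=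
  continuous_pi fun x => continuous_finset_sum _ fun w _ =>
    continuous_finset_sum _ fun y _ => continuous_apply _

lemma continuous_mXY : Continuous fun p : W × X × Y → ℝ => mXY p :=
  continuous_pi fun z => continuous_finset_sum _ fun w _ => continuous_apply _

lemma continuous_mWX : Continuous fun p : W × X × Y → ℝ => mWX p :=
  continuous_pi fun q => continuous_finset_sum _ fun y _ => continuous_apply _

lemma continuous_mWY : Continuous fun p : W × X × Y → ℝ => mWY p :=
  continuous_pi fun q => continuous_finset_sum _ fun x _ => continuous_apply _

lemma continuous_jointXY (P : X × Y → ℝ) :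
    Continuous fun ch : X × Y → Waux X Y → ℝ => jointXY P ch := by
  unfold jointXY
  exact continuous_pi fun t =>
    continuous_const.mul ((continuous_apply t.1).comp (continuous_apply (t.2.1, t.2.2)))

lemma continuous_obj (P : X × Y → ℝ) (μ : ℝ) :
    Continuous fun ch : X × Y → Waux X Y → ℝ =>
      miW_XY (jointXY P ch) + μ * condEntY_W (jointXY P ch) := by
  have hj := continuous_jointXY (X := X) (Y := Y) P
  unfold miW_XY condEntY_W
  exact (((continuous_ent.comp (continuous_mW.comp hj)).add
      (continuous_ent.comp (continuous_mXY.comp hj))).sub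
      (continuous_ent.comp hj)).add
    (continuous_const.mul ((continuous_ent.comp (continuous_mWY.comp hj)).sub
      (continuous_ent.comp (continuous_mW.comp hj))))

lemma continuous_cmi (P : X × Y → ℝ) :
    Continuous fun ch : X × Y → Waux X Y → ℝ => cmiWY_X (jointXY P ch) := by
  have hj := continuous_jointXY (X := X) (Y := Y) P
  unfold cmiWY_X
  exact (((continuous_ent.comp (continuous_mWX.comp hj)).add
      (continuous_ent.comp (continuous_mXY.comp hj))).sub
      (continuous_ent.comp (continuous_mX.comp hj))).sub (continuous_ent.comp hj)

/-- the set of channels is compact. -/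
lemma isCompact_chanSet (Z W : Type*) [Fintype Z] [Fintype W] :
    IsCompact {ch : Z → W → ℝ | IsChannel ch} := by
  have hcomp : IsCompact (Set.pi Set.univ fun _ : Z =>
      Set.pi Set.univ fun _ : W => Set.Icc (0 : ℝ) 1) :=
    isCompact_univ_pi fun _ => isCompact_univ_pi fun _ => isCompact_Icc
  have hsub : {ch : Z → W → ℝ | IsChannel ch} ⊆ Set.pi Set.univ fun _ : Z =>
      Set.pi Set.univ fun _ : W => Set.Icc (0 : ℝ) 1 := by
    rintro ch ⟨h0, h1⟩ z _ w _
    refine ⟨h0 z w, ?_⟩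
    calc ch z w ≤ ∑ w', ch z w' :=
          Finset.single_le_sum (fun w' _ => h0 z w') (Finset.mem_univ w)
      _ = 1 := h1 z
  have hcl : IsClosed {ch : Z → W → ℝ | IsChannel ch} := by
    have heq : {ch : Z → W → ℝ | IsChannel ch} =
        (⋂ z, ⋂ w, {ch : Z → W → ℝ | 0 ≤ ch z w}) ∩
        ⋂ z, {ch : Z → W → ℝ | ∑ w, ch z w = 1} := by
      ext ch
      simp only [Set.mem_setOf_eq, Set.mem_inter_iff, Set.mem_iInter, IsChannel]
    rw [heq]
    refine IsClosed.inter ?_ ?_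
    · exact isClosed_iInter fun z => isClosed_iInter fun w =>
        isClosed_le continuous_const ((continuous_apply w).comp (continuous_apply z))
    · exact isClosed_iInter fun z => isClosed_eq
        (continuous_finset_sum _ fun w _ =>
          (continuous_apply w).comp (continuous_apply z)) continuous_const
  exact hcomp.of_isClosed_subset hcl hsub

instance : Inhabited (Waux X Y) := by unfold Waux; infer_instance

lemma ent_deterministic {α β : Type*} [Fintype α] [Fintype β] (q : α → ℝ) (b0 : β) :
    ent (fun t : β × α => q t.2 * (if t.1 = b0 then 1 else 0)) = ent q := by
  unfold ent
  congr 1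
  rw [Fintype.sum_prod_type]
  rw [Finset.sum_eq_single b0]
  · simp
  · intro b _ hb; simp [hb]
  · simp

lemma const_channel_cmi (P : X × Y → ℝ) :
    cmiWY_X (jointXY P (fun _ w => if w = (default : Waux X Y) then 1 else 0)) = 0 := by
  set w0 : Waux X Y := default
  set p : Waux X Y × X × Y → ℝ :=
    jointXY P (fun _ w => if w = w0 then 1 else 0) with hpdef
  have hp : ent p = ent P := by
    have h : p = fun t : Waux X Y × (X × Y) => P t.2 * (if t.1 = w0 then 1 else 0) := by
      funext t; simp [hpdef, jointXY]
    rw [h, ent_deterministic]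
  have hWX : ent (mWX p) = ent (fun x : X => ∑ y, P (x, y)) := by
    have h : mWX p = fun t : Waux X Y × X =>
        (fun x : X => ∑ y, P (x, y)) t.2 * (if t.1 = w0 then 1 else 0) := by
      funext t
      simp only [mWX, hpdef, jointXY]
      rw [Finset.sum_mul]
    rw [h]; exact ent_deterministic (fun x : X => ∑ y, P (x, y)) w0
  have hXY : mXY p = P := by
    funext z
    simp [mXY, hpdef, jointXY, mul_ite]
  have hX : mX p = fun x : X => ∑ y, P (x, y) := by
    funext x
    simp only [mX, hpdef, jointXY]
    rw [Finset.sum_comm]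
    congr 1; funext y
    simp [mul_ite]
  rw [cmiWY_X, hWX, hXY, hX, hp]
  ring

/-- `lim_{δ→0} R_μ(δ|P_{XY}) = R_μ(0|P_{XY})`. -/
theorem stmt_6 [Nonempty X] [Nonempty Y] (P : X × Y → ℝ) (hP : IsDist P)
    (μ : ℝ) (hμ : 0 ≤ μ) :
    Filter.Tendsto (fun δ : ℝ => Rmu P μ δ) (nhdsWithin 0 (Set.Ioi 0))
      (nhds (Rmu P μ 0)) := by
  classical
  set f : (X × Y → Waux X Y → ℝ) → ℝ :=
    fun ch => miW_XY (jointXY P ch) + μ * condEntY_W (jointXY P ch) with hfdef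
  set g : (X × Y → Waux X Y → ℝ) → ℝ := fun ch => cmiWY_X (jointXY P ch) with hgdef
  have hfc : Continuous f := continuous_obj P μ
  have hgc : Continuous g := continuous_cmi P
  have hcomp : IsCompact {ch : X × Y → Waux X Y → ℝ | IsChannel ch} :=
    isCompact_chanSet _ _
  set S : ℝ → Set ℝ :=
    fun δ => {r : ℝ | ∃ ch : X × Y → Waux X Y → ℝ, IsChannel ch ∧
      g ch ≤ δ ∧ r = f ch} with hSdef
  have hRmu : ∀ δ : ℝ, Rmu P μ δ = sInf (S δ) := fun δ => rfl
  -- the constant channel is feasible for every δ ≥ 0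
  set ch0 : X × Y → Waux X Y → ℝ := fun _ w => if w = default then 1 else 0 with hch0def
  have hch0 : IsChannel ch0 := by
    constructor
    · intro z w; by_cases h : w = default <;> simp [hch0def, h]
    · intro z; simp [hch0def]
  have hg0 : g ch0 = 0 := const_channel_cmi P
  have hmem : ∀ δ : ℝ, 0 ≤ δ → f ch0 ∈ S δ :=
    fun δ hδ => ⟨ch0, hch0, by rw [hg0]; exact hδ, rfl⟩
  have hbdd : ∀ δ : ℝ, BddBelow (S δ) := by
    intro δ
    have hsub : S δ ⊆ f '' {ch | IsChannel ch} := by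
      rintro r ⟨ch, hch, _, hr⟩; exact ⟨ch, hch, hr.symm⟩
    exact ((hcomp.image hfc).bddBelow).mono hsub
  have hmono : ∀ δ : ℝ, 0 ≤ δ → Rmu P μ δ ≤ Rmu P μ 0 := by
    intro δ hδ
    rw [hRmu, hRmu]
    refine csInf_le_csInf (hbdd δ) ⟨f ch0, hmem 0 le_rfl⟩ ?_
    rintro r ⟨ch, h1, h2, h3⟩
    exact ⟨ch, h1, h2.trans hδ, h3⟩
  have key : ∀ ε : ℝ, 0 < ε → ∃ δ0 : ℝ, 0 < δ0 ∧
      ∀ δ : ℝ, 0 < δ → δ < δ0 → Rmu P μ 0 - ε < Rmu P μ δ := by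
    intro ε hε
    by_contra hcon
    push_neg at hcon
    have hcon' : ∀ n : ℕ, ∃ δ : ℝ, 0 < δ ∧ δ < 1 / (n + 1) ∧
        Rmu P μ δ ≤ Rmu P μ 0 - ε := by
      intro n
      exact hcon (1 / (n + 1)) (by positivity)
    choose δs hδpos hδlt hRle using hcon'
    have hlt : ∀ n : ℕ, sInf (S (δs n)) < Rmu P μ 0 - ε / 2 := by
      intro n
      have := hRle n
      rw [hRmu] at this
      linarith
    have hex : ∀ n : ℕ, ∃ ch : X × Y → Waux X Y → ℝ, IsChannel ch ∧
        g ch ≤ δs n ∧ f ch < Rmu P μ 0 - ε / 2 := by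
      intro n
      obtain ⟨r, hr, hrlt⟩ :=
        exists_lt_of_csInf_lt ⟨f ch0, hmem _ (hδpos n).le⟩ (hlt n)
      obtain ⟨ch, h1, h2, h3⟩ := hr
      exact ⟨ch, h1, h2, h3 ▸ hrlt⟩
    choose ch hch hgch hfch using hex
    obtain ⟨chlim, hchlim, φ, hφ, htend⟩ := hcomp.tendsto_subseq hch
    have htg : Filter.Tendsto (fun n => g (ch (φ n))) Filter.atTop (nhds (g chlim)) :=
      (hgc.tendsto chlim).comp htend
    have htf : Filter.Tendsto (fun n => f (ch (φ n))) Filter.atTop (nhds (f chlim)) :=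
      (hfc.tendsto chlim).comp htend
    have hglim : g chlim ≤ 0 := by
      have h0 : Filter.Tendsto (fun n : ℕ => 1 / ((n : ℝ) + 1)) Filter.atTop (nhds 0) :=
        tendsto_one_div_add_atTop_nhds_zero_nat
      refine le_of_tendsto_of_tendsto' htg h0 ?_
      intro n
      have h1 : g (ch (φ n)) ≤ δs (φ n) := hgch (φ n)
      have h2 : δs (φ n) < 1 / ((φ n : ℝ) + 1) := hδlt (φ n)
      have h3 : (1 : ℝ) / ((φ n : ℝ) + 1) ≤ 1 / ((n : ℝ) + 1) := by
        apply one_div_le_one_div_of_le (by positivity)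
        have hn : (n : ℝ) ≤ (φ n : ℝ) := by exact_mod_cast hφ.le_apply
        linarith
      linarith
    have hflim : f chlim ≤ Rmu P μ 0 - ε / 2 := by
      refine le_of_tendsto htf (Filter.Eventually.of_forall fun n => (hfch (φ n)).le)
    have hge : Rmu P μ 0 ≤ f chlim := by
      rw [hRmu]
      exact csInf_le (hbdd 0) ⟨chlim, hchlim, hglim, rfl⟩
    have hcontr : Rmu P μ 0 ≤ Rmu P μ 0 - ε / 2 := hge.trans hflim
    linarith
  rw [Metric.tendsto_nhdsWithin_nhds]
  intro ε hε
  obtain ⟨δ0, hδ0, h⟩ := key ε hε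
  refine ⟨δ0, hδ0, ?_⟩
  intro δ hδ hdist
  rw [Real.dist_eq] at hdist ⊢
  have hδpos : 0 < δ := hδ
  have hδlt : δ < δ0 := by
    rw [sub_zero, abs_of_pos hδpos] at hdist; exact hdist
  have h1 := h δ hδpos hδlt
  have h2 := hmono δ hδpos.le
  rw [abs_lt]
  constructor <;> linarith
end
end

section
/- Fix a joint type P_{X̄Ȳ} of sequences of length n over finite alphabets 𝒳, 𝒴, with type class T^n_{X̄Ȳ}, and let T^n_{X̄} be the type class of the marginal. Given a WAK code (φ̃₀ : 𝒳ⁿ → M̃₀, φ̃₂ : 𝒴ⁿ → M̃₂, ψ̃) with log|T^n_{X̄}| ≥ log|M̃₀|, there exists a modified WAK code (φ̂₀ : 𝒳ⁿ → M̂₀, φ̂₂, ψ̂) with log|M̂₀| ≤ log|M̃₀| + log n + log log|𝒳| + 2, M̂₂ = M̃₂, error probability under the uniform distribution on T^n_{X̄Ȳ} no larger than that of the original code, and |φ̂₀⁻¹(m) ∩ T^n_{X̄}| ≤ |T^n_{X̄}|/|M̃₀| for every m ∈ M̂₀. -/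
/-!
Cut every fibre of `φ0` on `T = T^n_{X̄}` into consecutive blocks of `B = ⌊|T| / |M0|⌋`
elements and send `x` to (the index of) the pair `(φ0 x, block of x)`. The new fibres on `T` have
at most `B ≤ |T| / |M0|` elements; `φ0` factors through the new encoder on `T`, which contains
the `𝒳`-marginals of the joint type class, so decoding through the old message loses nothing;
and there are at most `∑ ⌈|T_m| / B⌉ ≤ |T| / B + |M0| ≤ 3 |M0|` blocks, so `4 |M0|` messages
suffice, as `log n` and `log log |𝒳|` are nonnegative.
-/

open scoped Classical BigOperators
noncomputable section

variable {𝒳 𝒴 : Type} [Fintype 𝒳] [Fintype 𝒴]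

/-- the joint type class `T^n_{X̄Ȳ}` of the joint type `Q` (empirical counts). -/
def jointTypeClass (n : ℕ) (Q : 𝒳 × 𝒴 → ℕ) :
    Finset ((Fin n → 𝒳) × (Fin n → 𝒴)) :=
  Finset.univ.filter (fun p => ∀ z : 𝒳 × 𝒴,
    (Finset.univ.filter (fun i : Fin n => (p.1 i, p.2 i) = z)).card = Q z)

/-- the type class `T^n_{X̄}` of the `𝒳`-marginal of the joint type `Q`. -/
def typeClassX (n : ℕ) (Q : 𝒳 × 𝒴 → ℕ) : Finset (Fin n → 𝒳) :=
  Finset.univ.filter (fun x => ∀ a : 𝒳,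
    (Finset.univ.filter (fun i : Fin n => x i = a)).card = ∑ b, Q (a, b))

/-- error probability of the WAK code `(φ0, φ2, ψ)` under the uniform
distribution on the joint type class of `Q`. -/
def errWAK (n : ℕ) (Q : 𝒳 × 𝒴 → ℕ) {M0 M2 : Type}
    (φ0 : (Fin n → 𝒳) → M0) (φ2 : (Fin n → 𝒴) → M2)
    (ψ : M0 × M2 → (Fin n → 𝒴)) : ℝ :=
  (((jointTypeClass n Q).filter (fun p => ψ (φ0 p.1, φ2 p.2) ≠ p.2)).card : ℝ) /
    ((jointTypeClass n Q).card : ℝ)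

open Finset Real

section Chunks

variable {α : Type*}

def chunkIndex (s : Finset α) (B : ℕ) (x : α) : ℕ := s.toList.idxOf x / B

lemma chunkIndex_le_card_div {s : Finset α} {x : α} (hx : x ∈ s) (B : ℕ) :
    chunkIndex s B x ≤ #s / B :=
  Nat.div_le_div_right (by simpa using (List.idxOf_lt_length_iff.2 (mem_toList.2 hx)).le)

lemma card_filter_chunkIndex_eq_le (s : Finset α) {B : ℕ} (hB : 0 < B) (i : ℕ) :
    #{x ∈ s | chunkIndex s B x = i} ≤ B := by
  calc #{x ∈ s | chunkIndex s B x = i} ≤ #(Ico (i * B) (i * B + B)) := by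
        refine card_le_card_of_injOn (s.toList.idxOf ·) (fun x hx => ?_) fun x hx y _ h => ?_
        · obtain ⟨-, hi : s.toList.idxOf x / B = i⟩ := mem_filter.1 hx
          have hlt := Nat.lt_mul_div_succ (s.toList.idxOf x) hB
          rw [hi] at hlt
          exact mem_Ico.2 ⟨hi ▸ Nat.div_mul_le_self _ _, by linarith⟩
        · exact (List.idxOf_inj (mem_toList.2 (mem_filter.1 hx).1)).1 h
    _ = B := by simp

end Chunks

lemma Finset.sum_nat_div_le {ι : Type*} (s : Finset ι) (f : ι → ℕ) (B : ℕ) :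
    ∑ i ∈ s, f i / B ≤ (∑ i ∈ s, f i) / B := by
  rcases B.eq_zero_or_pos with rfl | hB
  · simp
  rw [Nat.le_div_iff_mul_le hB, sum_mul]
  exact sum_le_sum fun i _ => Nat.div_mul_le_self _ _

section BalancedRefinement

variable {α M : Type*}

def blockLabel (T : Finset α) (φ : α → M) (B : ℕ) (x : α) : M × ℕ :=
  (φ x, chunkIndex {y ∈ T | φ y = φ x} B x)

lemma card_filter_blockLabel_eq_le (T : Finset α) (φ : α → M) {B : ℕ} (hB : 0 < B) (x : α) :
    #{y ∈ T | blockLabel T φ B y = blockLabel T φ B x} ≤ B := by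
  refine (card_le_card fun y hy => ?_).trans (card_filter_chunkIndex_eq_le
    {y ∈ T | φ y = φ x} hB (chunkIndex {y ∈ T | φ y = φ x} B x))
  obtain ⟨hyT, hy⟩ := mem_filter.1 hy
  obtain ⟨hφ, hchunk⟩ := Prod.mk.inj hy
  rw [hφ] at hchunk
  exact mem_filter.2 ⟨mem_filter.2 ⟨hyT, hφ⟩, hchunk⟩

lemma card_image_blockLabel_le [Fintype M] (T : Finset α) (φ : α → M) (B : ℕ) :
    #(T.image (blockLabel T φ B)) ≤ #T / B + Fintype.card M := by
  calc #(T.image (blockLabel T φ B))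
      ≤ #(univ.biUnion fun b => (range (#{y ∈ T | φ y = b} / B + 1)).image (Prod.mk b)) := by
        refine card_le_card fun l hl => ?_
        obtain ⟨x, hx, rfl⟩ := mem_image.1 hl
        refine mem_biUnion.2 ⟨φ x, mem_univ _, mem_image.2 ⟨_, mem_range.2 ?_, rfl⟩⟩
        exact Nat.lt_succ_of_le
          (chunkIndex_le_card_div (s := {y ∈ T | φ y = φ x}) (mem_filter.2 ⟨hx, rfl⟩) B)
    _ ≤ ∑ b, (#{y ∈ T | φ y = b} / B + 1) :=
        card_biUnion_le.trans (sum_le_sum fun b _ => card_image_le.trans (card_range _).le)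
    _ ≤ #T / B + Fintype.card M := by
        rw [sum_add_distrib, card_eq_sum_card_fiberwise (f := φ) (t := univ) fun x _ => mem_univ _]
        simpa using sum_nat_div_le univ (fun b => #{y ∈ T | φ y = b}) B

theorem exists_balanced_refinement [Fintype M] [Nonempty M] (T : Finset α) (φ : α → M) {B : ℕ}
    (hB : 0 < B) :
    ∃ (φ' : α → Fin (#T / B + Fintype.card M)) (g : Fin (#T / B + Fintype.card M) → M),
      (∀ x ∈ T, g (φ' x) = φ x) ∧ ∀ j, #{x ∈ T | φ' x = j} ≤ B := by
  set S := T.image (blockLabel T φ B)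
  have : Nonempty (Fin (#T / B + Fintype.card M)) :=
    ⟨⟨0, Nat.add_pos_right _ Fintype.card_pos⟩⟩
  obtain ⟨e, he⟩ : ∃ e : M × ℕ → Fin (#T / B + Fintype.card M), Set.InjOn e S :=
    Set.exists_injOn_iff_injective.2 ⟨_, (S.equivFin.toEmbedding.trans
      (Fin.castLEEmb (card_image_blockLabel_le T φ B))).injective⟩
  refine ⟨fun x => e (blockLabel T φ B x), fun j => (Function.invFunOn e S j).1,
    fun x hx => ?_, fun j => ?_⟩
  · exact congrArg Prod.fst (he.leftInvOn_invFunOn (mem_image_of_mem _ hx))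
  obtain h | ⟨x, hx⟩ := ({x ∈ T | e (blockLabel T φ B x) = j}).eq_empty_or_nonempty
  · simp [h]
  refine (card_le_card fun y hy => ?_).trans (card_filter_blockLabel_eq_le T φ hB x)
  obtain ⟨hxT, hxj⟩ := mem_filter.1 hx
  obtain ⟨hyT, hyj⟩ := mem_filter.1 hy
  exact mem_filter.2
    ⟨hyT, he (mem_image_of_mem _ hyT) (mem_image_of_mem _ hxT) (hyj.trans hxj.symm)⟩

end BalancedRefinement

lemma fst_mem_typeClassX {n : ℕ} {Q : 𝒳 × 𝒴 → ℕ} {p : (Fin n → 𝒳) × (Fin n → 𝒴)}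
    (hp : p ∈ jointTypeClass n Q) : p.1 ∈ typeClassX n Q := by
  simp only [jointTypeClass, typeClassX, mem_filter, mem_univ, true_and] at hp ⊢
  intro a
  rw [card_eq_sum_card_fiberwise (f := p.2) (t := univ) fun _ _ => mem_univ _]
  refine sum_congr rfl fun b _ => ?_
  rw [← hp (a, b), filter_filter]
  simp [Prod.ext_iff]

lemma errWAK_comp_decoder {n : ℕ} {Q : 𝒳 × 𝒴 → ℕ} {M0 M2 K : Type}
    {φ0 : (Fin n → 𝒳) → M0} (φ2 : (Fin n → 𝒴) → M2) (ψ : M0 × M2 → (Fin n → 𝒴))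
    {φ0' : (Fin n → 𝒳) → K} {g : K → M0} (hg : ∀ x ∈ typeClassX n Q, g (φ0' x) = φ0 x) :
    errWAK n Q φ0' φ2 (fun p => ψ (g p.1, p.2)) = errWAK n Q φ0 φ2 ψ := by
  unfold errWAK
  congr 3
  exact filter_congr fun p hp => by simp only [hg _ (fst_mem_typeClassX hp)]

lemma Nat.div_div_le_two_mul {t m : ℕ} (hm : 0 < m) (hmt : m ≤ t) : t / (t / m) ≤ 2 * m := by
  have hB : 0 < t / m := Nat.div_pos hmt hm
  have ht : t < m * (t / m + 1) := Nat.lt_mul_div_succ t hm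
  exact ((Nat.div_lt_iff_lt_mul hB).2 (by nlinarith)).le

lemma Real.logb_two_natCast_nonneg (k : ℕ) : 0 ≤ logb 2 k :=
  div_nonneg (log_natCast_nonneg k) (log_nonneg one_le_two)

lemma Real.logb_two_logb_two_natCast_nonneg (k : ℕ) : 0 ≤ logb 2 (logb 2 k) := by
  rcases le_or_gt k 1 with hk | hk
  · interval_cases k <;> simp
  refine logb_nonneg one_lt_two ?_
  rw [← logb_self_eq_one one_lt_two]
  exact logb_le_logb_of_le one_lt_two two_pos (by exact_mod_cast hk)

theorem stmt_10_general {M0 M2 : Type} [Fintype M0] [Fintype M2]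
    (n : ℕ) (Q : 𝒳 × 𝒴 → ℕ)
    (φ0 : (Fin n → 𝒳) → M0) (φ2 : (Fin n → 𝒴) → M2)
    (ψ : M0 × M2 → (Fin n → 𝒴))
    (hM0 : Real.logb 2 (Fintype.card M0)
            ≤ Real.logb 2 ((typeClassX n Q).card)) :
    ∃ (k : ℕ) (φ0' : (Fin n → 𝒳) → Fin k) (ψ' : Fin k × M2 → (Fin n → 𝒴)),
      Real.logb 2 k ≤ Real.logb 2 (Fintype.card M0) + Real.logb 2 n
          + Real.logb 2 (Real.logb 2 (Fintype.card 𝒳)) + 2 ∧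
      errWAK n Q φ0' φ2 ψ' ≤ errWAK n Q φ0 φ2 ψ ∧
      ∀ m : Fin k,
        (((typeClassX n Q).filter (fun x => φ0' x = m)).card : ℝ)
          ≤ ((typeClassX n Q).card : ℝ) / (Fintype.card M0 : ℝ) := by
  have hslack := add_nonneg (logb_two_natCast_nonneg n)
    (logb_two_logb_two_natCast_nonneg (Fintype.card 𝒳))
  obtain hT | ⟨x₀, hx₀⟩ := (typeClassX n Q).eq_empty_or_nonempty
  · let e := Fintype.equivFin M0
    refine ⟨_, e ∘ φ0, fun p => ψ (e.symm p.1, p.2), by linarith,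
      (errWAK_comp_decoder φ2 ψ fun x _ => e.symm_apply_apply (φ0 x)).le, fun j => by simp [hT]⟩
  have : Nonempty M0 := ⟨φ0 x₀⟩
  set m := Fintype.card M0
  set t := #(typeClassX n Q)
  have hm : 0 < m := Fintype.card_pos
  have hmt : m ≤ t := by
    have ht : 0 < t := card_pos.2 ⟨x₀, hx₀⟩
    exact_mod_cast (logb_le_logb one_lt_two (by positivity) (by positivity)).1 hM0
  obtain ⟨φ0', g, hg, hfiber⟩ :=
    exists_balanced_refinement (typeClassX n Q) φ0 (Nat.div_pos hmt hm)
  refine ⟨_, φ0', fun p => ψ (g p.1, p.2), ?_, (errWAK_comp_decoder φ2 ψ hg).le, fun j => ?_⟩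
  · have hk : t / (t / m) + m ≤ 4 * m := by linarith [Nat.div_div_le_two_mul hm hmt]
    calc logb 2 ((t / (t / m) + m : ℕ) : ℝ) ≤ logb 2 ((4 * m : ℕ) : ℝ) :=
          logb_le_logb_of_le one_lt_two (by positivity) (by exact_mod_cast hk)
      _ = logb 2 m + 2 := by
          rw [Nat.cast_mul, Nat.cast_ofNat, logb_mul (by norm_num) (by positivity),
            show (4 : ℝ) = 2 ^ (2 : ℝ) by norm_num, logb_rpow two_pos (by norm_num)]
          ring
      _ ≤ _ := by linarith
  · calc (#{x ∈ typeClassX n Q | φ0' x = j} : ℝ) ≤ ((t / m : ℕ) : ℝ) := by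
          exact_mod_cast hfiber j
      _ ≤ t / m := Nat.cast_div_le

/-- balanced WAK code.  Given a WAK code with
`log|T^n_{X̄}| ≥ log|M̃₀|`, there is a modified WAK code (same `M₂`) with
`log|M̂₀| ≤ log|M̃₀| + log n + log log|𝒳| + 2`, error probability on the type
class no larger, and every fiber of the helper encoder intersecting `T^n_{X̄}`
in at most `|T^n_{X̄}|/|M̃₀|` elements. -/
theorem stmt_10 {M0 M2 : Type} [Fintype M0] [Fintype M2] [Nonempty 𝒴]
    (n : ℕ) (hn : 1 ≤ n) (Q : 𝒳 × 𝒴 → ℕ) (hQ : ∑ z, Q z = n)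
    (φ0 : (Fin n → 𝒳) → M0) (φ2 : (Fin n → 𝒴) → M2)
    (ψ : M0 × M2 → (Fin n → 𝒴))
    (hM0 : Real.logb 2 (Fintype.card M0)
            ≤ Real.logb 2 ((typeClassX n Q).card)) :
    ∃ (k : ℕ) (φ0' : (Fin n → 𝒳) → Fin k) (ψ' : Fin k × M2 → (Fin n → 𝒴)),
      Real.logb 2 k ≤ Real.logb 2 (Fintype.card M0) + Real.logb 2 n
          + Real.logb 2 (Real.logb 2 (Fintype.card 𝒳)) + 2 ∧
      errWAK n Q φ0' φ2 ψ' ≤ errWAK n Q φ0 φ2 ψ ∧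
      ∀ m : Fin k,
        (((typeClassX n Q).filter (fun x => φ0' x = m)).card : ℝ)
          ≤ ((typeClassX n Q).card : ℝ) / (Fintype.card M0 : ℝ) :=
  stmt_10_general n Q φ0 φ2 ψ hM0
end
end
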